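/- arXiv:2403.15302 — 3 statements merged into one kernel-verified Lean document; each statement's English description precedes it below -/
import Mathlib

section
/- Fix t ∈ (0, τ]. For every π ∈ (0, 1), the map π ↦ Var(t, π) is twice differentiable at π with second derivative equal to 2·n²·S(t)²·∫₀^t f(r)·S(r)·ψ(r)²/Y(r, π)³ dr; in particular this second derivative is nonnegative. -/
/-!
Since `Y r q * S r = A r + q * B r` with `A = n S² qP` and `B = n S² ψ`, the variance is
`S(t)² ∫₀ᵗ f / (A + q B)`. On the compact `[0, t]` the denominator stays away from zero for `q`
near `p`, so one may differentiate under the integral sign twice, getting `-∫ f B / (A + q B)²`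
and then `2 ∫ f B² / (A + q B)³`; the latter is the claimed integral because
`B² / (Y S)³ = n² S ψ² / Y³`, and it is nonnegative because its integrand is.
-/

open MeasureTheory Set Metric
open scoped Interval Topology

theorem hasDerivAt_intervalIntegral_of_continuousOn_deriv {E : Type*} [NormedAddCommGroup E]
    [NormedSpace ℝ E] {F F' : ℝ → ℝ → E} {x₀ ε a b : ℝ} (hε : 0 < ε)
    (hF : ∀ x ∈ ball x₀ ε, ContinuousOn (F x) [[a, b]])
    (hF' : ContinuousOn (Function.uncurry F') (closedBall x₀ ε ×ˢ [[a, b]]))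
    (h_diff : ∀ x ∈ ball x₀ ε, ∀ r ∈ [[a, b]], HasDerivAt (F · r) (F' x r) x) :
    HasDerivAt (fun x => ∫ r in a..b, F x r) (∫ r in a..b, F' x₀ r) x₀ := by
  obtain ⟨C, hC⟩ :=
    ((isCompact_closedBall x₀ ε).prod isCompact_uIcc).exists_bound_of_continuousOn hF'
  have hF'₀ : ContinuousOn (F' x₀) [[a, b]] :=
    hF'.comp (continuousOn_const.prodMk continuousOn_id)
      fun r hr => ⟨mem_closedBall_self hε.le, hr⟩
  refine (intervalIntegral.hasDerivAt_integral_of_dominated_loc_of_deriv_le (bound := fun _ => C)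
    (ball_mem_nhds x₀ hε) ?_ (hF x₀ (mem_ball_self hε)).intervalIntegrable
    ((hF'₀.mono uIoc_subset_uIcc).aestronglyMeasurable measurableSet_uIoc) ?_
    intervalIntegrable_const ?_).2
  · filter_upwards [ball_mem_nhds x₀ hε] with x hx
    exact ((hF x hx).mono uIoc_subset_uIcc).aestronglyMeasurable measurableSet_uIoc
  · exact ae_of_all _ fun r hr x hx =>
      hC (x, r) ⟨ball_subset_closedBall hx, uIoc_subset_uIcc hr⟩
  · exact ae_of_all _ fun r hr x hx => h_diff x hx r (uIoc_subset_uIcc hr)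

theorem hasDerivAt_div_add_mul_pow (g A B x : ℝ) (k : ℕ) (h : A + x * B ≠ 0) :
    HasDerivAt (fun y => g / (A + y * B) ^ k) (-(k * g * B) / (A + x * B) ^ (k + 1)) x := by
  have hL : HasDerivAt (fun y => A + y * B) B x := by
    simpa using ((hasDerivAt_id x).mul_const B).const_add A
  refine ((hasDerivAt_const x g).div (hL.fun_pow k) (pow_ne_zero k h)).congr_deriv ?_
  rcases k with _ | k
  · simp
  · rw [Nat.add_sub_cancel]
    field_simp
    ring

theorem hasDerivAt_intervalIntegral_div_add_mul_pow {g A B : ℝ → ℝ} {a b : ℝ} {U : Set ℝ}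
    (hg : ContinuousOn g [[a, b]]) (hA : ContinuousOn A [[a, b]])
    (hB : ContinuousOn B [[a, b]]) (hU : IsOpen U)
    (hL : ∀ x ∈ U, ∀ r ∈ [[a, b]], A r + x * B r ≠ 0) (k : ℕ) {x₀ : ℝ} (hx₀ : x₀ ∈ U) :
    HasDerivAt (fun x => ∫ r in a..b, g r / (A r + x * B r) ^ k)
      (∫ r in a..b, -(k * g r * B r) / (A r + x₀ * B r) ^ (k + 1)) x₀ := by
  obtain ⟨ε, hε, hεU⟩ := nhds_basis_closedBall.mem_iff.1 (hU.mem_nhds hx₀)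
  have hsnd {φ : ℝ → ℝ} (hφ : ContinuousOn φ [[a, b]]) :
      ContinuousOn (fun p : ℝ × ℝ => φ p.2) (closedBall x₀ ε ×ˢ [[a, b]]) :=
    hφ.comp continuousOn_snd fun p hp => hp.2
  have hL_ball : ∀ x ∈ ball x₀ ε, ∀ r ∈ [[a, b]], A r + x * B r ≠ 0 :=
    fun x hx => hL x (hεU (ball_subset_closedBall hx))
  refine hasDerivAt_intervalIntegral_of_continuousOn_deriv hε
    (fun x hx => hg.div ((hA.add (continuousOn_const.mul hB)).pow k) fun r hr =>
      pow_ne_zero k (hL_ball x hx r hr)) ?_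
    fun x hx r hr => hasDerivAt_div_add_mul_pow _ _ _ _ k (hL_ball x hx r hr)
  exact ((continuousOn_const.mul (hsnd hg)).mul (hsnd hB)).neg.div
    (((hsnd hA).add (continuousOn_fst.mul (hsnd hB))).pow (k + 1))
    fun p hp => pow_ne_zero _ (hL p.1 (hεU hp.1) p.2 hp.2)

theorem hasDerivAt_intervalIntegral_div_add_mul {g A B : ℝ → ℝ} {a b : ℝ} {U : Set ℝ}
    (hg : ContinuousOn g [[a, b]]) (hA : ContinuousOn A [[a, b]])
    (hB : ContinuousOn B [[a, b]]) (hU : IsOpen U)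
    (hL : ∀ x ∈ U, ∀ r ∈ [[a, b]], A r + x * B r ≠ 0) {x₀ : ℝ} (hx₀ : x₀ ∈ U) :
    HasDerivAt (fun x => ∫ r in a..b, g r / (A r + x * B r))
      (∫ r in a..b, -(g r * B r) / (A r + x₀ * B r) ^ 2) x₀ := by
  simpa using hasDerivAt_intervalIntegral_div_add_mul_pow hg hA hB hU hL 1 hx₀

theorem hasDerivAt_deriv_intervalIntegral_div_add_mul {g A B : ℝ → ℝ} {a b : ℝ} {U : Set ℝ}
    (hg : ContinuousOn g [[a, b]]) (hA : ContinuousOn A [[a, b]])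
    (hB : ContinuousOn B [[a, b]]) (hU : IsOpen U)
    (hL : ∀ x ∈ U, ∀ r ∈ [[a, b]], A r + x * B r ≠ 0) {x₀ : ℝ} (hx₀ : x₀ ∈ U) :
    HasDerivAt (deriv fun x => ∫ r in a..b, g r / (A r + x * B r))
      (∫ r in a..b, 2 * g r * B r ^ 2 / (A r + x₀ * B r) ^ 3) x₀ := by
  have hderiv : (deriv fun x => ∫ r in a..b, g r / (A r + x * B r)) =ᶠ[𝓝 x₀]
      fun x => ∫ r in a..b, -(g r * B r) / (A r + x * B r) ^ 2 := by
    filter_upwards [hU.mem_nhds hx₀] with x hx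
    exact (hasDerivAt_intervalIntegral_div_add_mul hg hA hB hU hL hx).deriv
  refine ((hasDerivAt_intervalIntegral_div_add_mul_pow (hg.mul hB).neg hA hB hU hL 2 hx₀
    ).congr_of_eventuallyEq hderiv).congr_deriv ?_
  congr 1 with r
  simp only [Pi.neg_apply, Pi.mul_apply]
  push_cast
  ring

theorem km_variance_second_deriv_general
    (τ n : ℝ)
    (f S qP qI : ℝ → ℝ)
    (hf_cont : ContinuousOn f (Set.Icc 0 τ)) (hS_cont : ContinuousOn S (Set.Icc 0 τ))
    (hqP_cont : ContinuousOn qP (Set.Icc 0 τ)) (hqI_cont : ContinuousOn qI (Set.Icc 0 τ))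
    (hf_pos : ∀ r ∈ Set.Icc (0:ℝ) τ, 0 < f r) (hS_pos : ∀ r ∈ Set.Icc (0:ℝ) τ, 0 < S r)
    (ψ : ℝ → ℝ) (hψ : ∀ r, ψ r = qI r - qP r)
    (Y : ℝ → ℝ → ℝ) (hY : ∀ r p, Y r p = n * S r * ((1 - p) * qP r + p * qI r))
    (hY_pos : ∀ p ∈ Set.Icc (0:ℝ) 1, ∀ r ∈ Set.Icc (0:ℝ) τ, 0 < Y r p)
    (Var : ℝ → ℝ → ℝ)
    (hVar : ∀ t p, Var t p = S t ^ 2 * ∫ r in (0:ℝ)..t, f r / (Y r p * S r))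
    (t : ℝ) (ht : t ∈ Set.Ioc 0 τ)
    (p : ℝ) (hp : p ∈ Set.Ioo (0:ℝ) 1) :
    DifferentiableAt ℝ (fun q => Var t q) p ∧
    HasDerivAt (deriv (fun q => Var t q))
      (2 * n ^ 2 * S t ^ 2 * ∫ r in (0:ℝ)..t, f r * S r * ψ r ^ 2 / (Y r p) ^ 3) p ∧
    0 ≤ 2 * n ^ 2 * S t ^ 2 * ∫ r in (0:ℝ)..t, f r * S r * ψ r ^ 2 / (Y r p) ^ 3 := by
  have hsub : [[0, t]] ⊆ Icc 0 τ := by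
    rw [uIcc_of_le ht.1.le]; exact Icc_subset_Icc_right ht.2
  set A : ℝ → ℝ := fun r => n * S r ^ 2 * qP r
  set B : ℝ → ℝ := fun r => n * S r ^ 2 * ψ r
  have hYS : ∀ r q, Y r q * S r = A r + q * B r := fun r q => by
    simp only [A, B, hY, hψ]; ring
  have hf : ContinuousOn f [[0, t]] := hf_cont.mono hsub
  have hS : ContinuousOn S [[0, t]] := hS_cont.mono hsub
  have hA : ContinuousOn A [[0, t]] :=
    (continuousOn_const.mul (hS.pow 2)).mul (hqP_cont.mono hsub)
  have hB : ContinuousOn B [[0, t]] := (continuousOn_const.mul (hS.pow 2)).mul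
    (((hqI_cont.sub hqP_cont).mono hsub).congr fun r _ => hψ r)
  have hL : ∀ q ∈ Ioo (0:ℝ) 1, ∀ r ∈ [[0, t]], A r + q * B r ≠ 0 := fun q hq r hr => by
    rw [← hYS]
    exact (mul_pos (hY_pos q (Ioo_subset_Icc_self hq) r (hsub hr)) (hS_pos r (hsub hr))).ne'
  have hintegrand : ∀ r ∈ [[0, t]], 2 * f r * B r ^ 2 / (A r + p * B r) ^ 3 =
      2 * n ^ 2 * (f r * S r * ψ r ^ 2 / Y r p ^ 3) := fun r hr => by
    have hSr := (hS_pos r (hsub hr)).ne'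
    have hYr := (hY_pos p (Ioo_subset_Icc_self hp) r (hsub hr)).ne'
    rw [← hYS]
    field_simp
    ring
  have hVar_eq : (fun q => Var t q) = fun q => S t ^ 2 * ∫ r in (0:ℝ)..t, f r / (A r + q * B r) :=
    funext fun q => by simp only [hVar, hYS]
  refine ⟨?_, ?_, ?_⟩
  · rw [hVar_eq]
    exact ((hasDerivAt_intervalIntegral_div_add_mul hf hA hB isOpen_Ioo hL hp).const_mul _
      ).differentiableAt
  · rw [hVar_eq, deriv_const_mul_field', mul_comm (2 * n ^ 2), mul_assoc,
      ← intervalIntegral.integral_const_mul, ← intervalIntegral.integral_congr hintegrand]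
    exact (hasDerivAt_deriv_intervalIntegral_div_add_mul hf hA hB isOpen_Ioo hL hp).const_mul _
  · refine mul_nonneg (by positivity) (intervalIntegral.integral_nonneg ht.1.le fun r hr => ?_)
    have hr' := hsub (Icc_subset_uIcc hr)
    have := hf_pos r hr'
    have := hS_pos r hr'
    have := hY_pos p (Ioo_subset_Icc_self hp) r hr'
    positivity

/-- Fix t ∈ (0, τ]. For every π ∈ (0, 1), the map π ↦ Var(t, π) is twice
differentiable at π with second derivative equal to
2·n²·S(t)²·∫₀ᵗ f(r)·S(r)·ψ(r)²/Y(r, π)³ dr; in particular this second derivative is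
nonnegative. -/
theorem km_variance_second_deriv
    (τ θ n c : ℝ) (hτ : 0 < τ) (hθ : 0 < θ) (hn : 0 < n) (hc : 0 < c)
    (f S qP qI : ℝ → ℝ)
    (hf_cont : ContinuousOn f (Set.Icc 0 τ)) (hS_cont : ContinuousOn S (Set.Icc 0 τ))
    (hqP_cont : ContinuousOn qP (Set.Icc 0 τ)) (hqI_cont : ContinuousOn qI (Set.Icc 0 τ))
    (hf_pos : ∀ r ∈ Set.Icc (0:ℝ) τ, 0 < f r) (hS_pos : ∀ r ∈ Set.Icc (0:ℝ) τ, 0 < S r)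
    (hqP_pos : ∀ r ∈ Set.Icc (0:ℝ) τ, 0 < qP r) (hqI_pos : ∀ r ∈ Set.Icc (0:ℝ) τ, 0 < qI r)
    (ψ : ℝ → ℝ) (hψ : ∀ r, ψ r = qI r - qP r)
    (Y : ℝ → ℝ → ℝ) (hY : ∀ r p, Y r p = n * S r * ((1 - p) * qP r + p * qI r))
    (hY_pos : ∀ p ∈ Set.Icc (0:ℝ) 1, ∀ r ∈ Set.Icc (0:ℝ) τ, 0 < Y r p)
    (Var : ℝ → ℝ → ℝ)
    (hVar : ∀ t p, Var t p = S t ^ 2 * ∫ r in (0:ℝ)..t, f r / (Y r p * S r))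
    (t : ℝ) (ht : t ∈ Set.Ioc 0 τ)
    (p : ℝ) (hp : p ∈ Set.Ioo (0:ℝ) 1) :
    DifferentiableAt ℝ (fun q => Var t q) p ∧
    HasDerivAt (deriv (fun q => Var t q))
      (2 * n ^ 2 * S t ^ 2 * ∫ r in (0:ℝ)..t, f r * S r * ψ r ^ 2 / (Y r p) ^ 3) p ∧
    0 ≤ 2 * n ^ 2 * S t ^ 2 * ∫ r in (0:ℝ)..t, f r * S r * ψ r ^ 2 / (Y r p) ^ 3 :=
  km_variance_second_deriv_general τ n f S qP qI hf_cont hS_cont hqP_cont hqI_cont hf_pos hS_pos ψ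
    hψ Y hY hY_pos Var hVar t ht p hp
end

section
/- (Proposition 2, optimality condition.) If π* ∈ (0, 1) satisfies K(π*) ≤ K(π) for all π ∈ [0, 1], where K(π) = ∫₀^τ W(t)·Var(t, π) dt, then W and V(·, π*) are orthogonal over [0, τ], i.e. ∫₀^τ W(t)·V(t, π*) dt = 0, where V(t, π) = S(t)²·∫₀^t f(r)·ψ(r)/Y(r, π)² dr. -/
/-!
Differentiating twice under the integral sign, `K` is differentiable on `(0, 1)` with
`K'(π) = -n ∫₀^τ W(t) V(t, π) dt`: since `∂Y/∂π = n S ψ`, the `π`-derivative of `f / (Y S)` is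
`-n f ψ / Y²`, and by compactness of `[0, τ] × [0, 1]` and positivity of `Y` this derivative is
bounded, which dominates both differentiations. An interior minimum is a critical point, and
`n ≠ 0`.
-/

open Set Filter Topology MeasureTheory Function
open scoped Interval

theorem hasDerivAt_intervalIntegral_of_norm_deriv_le {E : Type*} [NormedAddCommGroup E]
    [NormedSpace ℝ E] {F F' : ℝ → ℝ → E} {s : Set ℝ} {a b p C : ℝ} (hs : s ∈ 𝓝 p)
    (hF : ∀ q ∈ s, ContinuousOn (F q) [[a, b]]) (hF' : ContinuousOn (F' p) [[a, b]])
    (hF'_le : ∀ q ∈ s, ∀ r ∈ [[a, b]], ‖F' q r‖ ≤ C)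
    (hF_deriv : ∀ q ∈ s, ∀ r ∈ [[a, b]], HasDerivAt (F · r) (F' q r) q) :
    HasDerivAt (fun q => ∫ r in a..b, F q r) (∫ r in a..b, F' p r) p := by
  have hmeas {G : ℝ → E} (hG : ContinuousOn G [[a, b]]) :
      AEStronglyMeasurable G (volume.restrict (Ι a b)) :=
    (hG.mono uIoc_subset_uIcc).aestronglyMeasurable measurableSet_uIoc
  exact (intervalIntegral.hasDerivAt_integral_of_dominated_loc_of_deriv_le hs
    (eventually_of_mem hs fun q hq => hmeas (hF q hq))
    (hF p (mem_of_mem_nhds hs)).intervalIntegrable (hmeas hF')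
    (Eventually.of_forall fun r hr q hq => hF'_le q hq r (uIoc_subset_uIcc hr))
    intervalIntegrable_const
    (Eventually.of_forall fun r hr q hq => hF_deriv q hq r (uIoc_subset_uIcc hr))).2

theorem continuousOn_mul_primitive {g h : ℝ → ℝ} {τ : ℝ} (hτ : 0 ≤ τ)
    (hh : ContinuousOn h (Icc 0 τ)) (hg : ContinuousOn g (Icc 0 τ)) :
    ContinuousOn (fun t => h t * ∫ r in 0..t, g r) (Icc 0 τ) := by
  have hprim := intervalIntegral.continuousOn_primitive_interval (μ := volume)
    (a := 0) (b := τ) (f := g) (by simpa [uIcc_of_le hτ] using hg.integrableOn_Icc)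
  rw [uIcc_of_le hτ] at hprim
  exact hh.mul hprim

theorem norm_primitive_le_mul {E : Type*} [NormedAddCommGroup E] [NormedSpace ℝ E]
    {g : ℝ → E} {t τ C : ℝ} (ht : t ∈ Icc 0 τ) (hg : ∀ r ∈ Icc 0 τ, ‖g r‖ ≤ C) :
    ‖∫ r in 0..t, g r‖ ≤ C * τ := by
  have hC : 0 ≤ C := (norm_nonneg _).trans (hg 0 ⟨le_rfl, ht.1.trans ht.2⟩)
  calc ‖∫ r in 0..t, g r‖ ≤ C * |t - 0| :=
        intervalIntegral.norm_integral_le_of_norm_le_const fun r hr => by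
          rw [uIoc_of_le ht.1] at hr
          exact hg r ⟨hr.1.le, hr.2.trans ht.2⟩
    _ ≤ C * τ := by
        rw [sub_zero, abs_of_nonneg ht.1]
        exact mul_le_mul_of_nonneg_left ht.2 hC

section AtRisk

variable {n τ : ℝ} {f S ψ : ℝ → ℝ} {Y : ℝ → ℝ → ℝ}

theorem exists_norm_div_atRisk_sq_le (hf : ContinuousOn f (Icc 0 τ))
    (hψ : ContinuousOn ψ (Icc 0 τ)) (hY : ContinuousOn (uncurry Y) (Icc 0 τ ×ˢ Icc 0 1))
    (hY_pos : ∀ p ∈ Icc (0:ℝ) 1, ∀ r ∈ Icc (0:ℝ) τ, 0 < Y r p) :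
    ∃ C, ∀ q ∈ Icc (0:ℝ) 1, ∀ r ∈ Icc 0 τ, ‖f r * ψ r / Y r q ^ 2‖ ≤ C := by
  have hcont : ContinuousOn (fun x : ℝ × ℝ => f x.1 * ψ x.1 / Y x.1 x.2 ^ 2)
      (Icc 0 τ ×ˢ Icc 0 1) :=
    ((hf.comp continuousOn_fst fun _ hx => hx.1).mul
      (hψ.comp continuousOn_fst fun _ hx => hx.1)).div (hY.pow 2)
      fun x hx => (pow_pos (hY_pos x.2 hx.2 x.1 hx.1) 2).ne'
  obtain ⟨C, hC⟩ := (isCompact_Icc.prod isCompact_Icc).exists_bound_of_continuousOn hcont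
  exact ⟨C, fun q hq r hr => hC (r, q) ⟨hr, hq⟩⟩

theorem continuousOn_div_atRisk_mul (hf : ContinuousOn f (Icc 0 τ))
    (hS : ContinuousOn S (Icc 0 τ)) (hY : ContinuousOn (uncurry Y) (Icc 0 τ ×ˢ Icc 0 1))
    (hS_pos : ∀ r ∈ Icc (0:ℝ) τ, 0 < S r)
    (hY_pos : ∀ p ∈ Icc (0:ℝ) 1, ∀ r ∈ Icc (0:ℝ) τ, 0 < Y r p) {q : ℝ} (hq : q ∈ Icc (0:ℝ) 1) :
    ContinuousOn (fun r => f r / (Y r q * S r)) (Icc 0 τ) :=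
  hf.div ((hY.uncurry_right q hq).mul hS) fun r hr =>
    (mul_pos (hY_pos q hq r hr) (hS_pos r hr)).ne'

theorem continuousOn_mul_div_atRisk_sq (hf : ContinuousOn f (Icc 0 τ))
    (hψ : ContinuousOn ψ (Icc 0 τ)) (hY : ContinuousOn (uncurry Y) (Icc 0 τ ×ˢ Icc 0 1))
    (hY_pos : ∀ p ∈ Icc (0:ℝ) 1, ∀ r ∈ Icc (0:ℝ) τ, 0 < Y r p) {q : ℝ} (hq : q ∈ Icc (0:ℝ) 1) :
    ContinuousOn (fun r => f r * ψ r / Y r q ^ 2) (Icc 0 τ) :=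
  (hf.mul hψ).div ((hY.uncurry_right q hq).pow 2) fun r hr => (pow_pos (hY_pos q hq r hr) 2).ne'

theorem hasDerivAt_integral_div_atRisk (hf : ContinuousOn f (Icc 0 τ))
    (hS : ContinuousOn S (Icc 0 τ)) (hψ : ContinuousOn ψ (Icc 0 τ))
    (hY : ContinuousOn (uncurry Y) (Icc 0 τ ×ˢ Icc 0 1))
    (hS_pos : ∀ r ∈ Icc (0:ℝ) τ, 0 < S r)
    (hY_pos : ∀ p ∈ Icc (0:ℝ) 1, ∀ r ∈ Icc (0:ℝ) τ, 0 < Y r p)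
    (hY_deriv : ∀ r q, HasDerivAt (Y r) (n * S r * ψ r) q)
    {t p : ℝ} (ht : t ∈ Icc 0 τ) (hp : p ∈ Ioo (0:ℝ) 1) :
    HasDerivAt (fun q => ∫ r in 0..t, f r / (Y r q * S r))
      (-(n * ∫ r in 0..t, f r * ψ r / Y r p ^ 2)) p := by
  have hsub : [[0, t]] ⊆ Icc 0 τ := by
    rw [uIcc_of_le ht.1]; exact Icc_subset_Icc le_rfl ht.2
  obtain ⟨C, hC⟩ := exists_norm_div_atRisk_sq_le hf hψ hY hY_pos
  rw [← intervalIntegral.integral_const_mul, ← intervalIntegral.integral_neg]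
  refine hasDerivAt_intervalIntegral_of_norm_deriv_le (C := |n| * C)
    (F' := fun q r => -(n * (f r * ψ r / Y r q ^ 2))) (isOpen_Ioo.mem_nhds hp)
    (fun q hq => ?_) ?_ (fun q hq r hr => ?_) (fun q hq r hr => ?_)
  · exact (continuousOn_div_atRisk_mul hf hS hY hS_pos hY_pos (Ioo_subset_Icc_self hq)).mono hsub
  · exact ((continuousOn_mul_div_atRisk_sq hf hψ hY hY_pos
      (Ioo_subset_Icc_self hp)).const_smul n).neg.mono hsub
  · rw [norm_neg, norm_mul, Real.norm_eq_abs]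
    exact mul_le_mul_of_nonneg_left (hC q (Ioo_subset_Icc_self hq) r (hsub hr)) (abs_nonneg n)
  · have hSr := (hS_pos r (hsub hr)).ne'
    have hYr := (hY_pos q (Ioo_subset_Icc_self hq) r (hsub hr)).ne'
    refine ((hasDerivAt_const q (f r)).div ((hY_deriv r q).mul_const (S r))
      (mul_ne_zero hYr hSr)).congr_deriv ?_
    field_simp
    ring

theorem hasDerivAt_integral_weighted_variance {W : ℝ → ℝ} (hτ : 0 ≤ τ)
    (hW : ContinuousOn W (Icc 0 τ)) (hf : ContinuousOn f (Icc 0 τ))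
    (hS : ContinuousOn S (Icc 0 τ)) (hψ : ContinuousOn ψ (Icc 0 τ))
    (hY : ContinuousOn (uncurry Y) (Icc 0 τ ×ˢ Icc 0 1))
    (hS_pos : ∀ r ∈ Icc (0:ℝ) τ, 0 < S r)
    (hY_pos : ∀ p ∈ Icc (0:ℝ) 1, ∀ r ∈ Icc (0:ℝ) τ, 0 < Y r p)
    (hY_deriv : ∀ r q, HasDerivAt (Y r) (n * S r * ψ r) q) {p : ℝ} (hp : p ∈ Ioo (0:ℝ) 1) :
    HasDerivAt (fun q => ∫ t in 0..τ, W t * (S t ^ 2 * ∫ r in 0..t, f r / (Y r q * S r)))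
      (-(n * ∫ t in 0..τ, W t * (S t ^ 2 * ∫ r in 0..t, f r * ψ r / Y r p ^ 2))) p := by
  obtain ⟨C, hC⟩ := exists_norm_div_atRisk_sq_le hf hψ hY hY_pos
  obtain ⟨CW, hCW⟩ := isCompact_Icc.exists_bound_of_continuousOn hW
  obtain ⟨CS, hCS⟩ := isCompact_Icc.exists_bound_of_continuousOn (f := fun t => S t ^ 2) (hS.pow 2)
  have hCW₀ : 0 ≤ CW := (norm_nonneg _).trans (hCW 0 ⟨le_rfl, hτ⟩)
  have hCS₀ : 0 ≤ CS := (norm_nonneg _).trans (hCS 0 ⟨le_rfl, hτ⟩)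
  rw [← intervalIntegral.integral_const_mul, ← intervalIntegral.integral_neg]
  refine hasDerivAt_intervalIntegral_of_norm_deriv_le (C := |n| * (CW * (CS * (C * τ))))
    (F' := fun q t => -(n * (W t * (S t ^ 2 * ∫ r in 0..t, f r * ψ r / Y r q ^ 2))))
    (isOpen_Ioo.mem_nhds hp) (fun q hq => ?_) ?_ (fun q hq t ht => ?_) (fun q hq t ht => ?_)
  · rw [uIcc_of_le hτ]
    exact hW.mul (continuousOn_mul_primitive hτ (hS.pow 2)
      (continuousOn_div_atRisk_mul hf hS hY hS_pos hY_pos (Ioo_subset_Icc_self hq)))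
  · rw [uIcc_of_le hτ]
    exact ((hW.mul (continuousOn_mul_primitive hτ (hS.pow 2)
      (continuousOn_mul_div_atRisk_sq hf hψ hY hY_pos (Ioo_subset_Icc_self hp)))).const_smul n).neg
  · rw [uIcc_of_le hτ] at ht
    rw [norm_neg, norm_mul, norm_mul, norm_mul, Real.norm_eq_abs n]
    have hI := norm_primitive_le_mul ht fun r hr => hC q (Ioo_subset_Icc_self hq) r hr
    gcongr
    exacts [hCW t ht, hCS t ht]
  · rw [uIcc_of_le hτ] at ht
    exact (((hasDerivAt_integral_div_atRisk hf hS hψ hY hS_pos hY_pos hY_deriv ht hq).const_mul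
      (S t ^ 2)).const_mul (W t)).congr_deriv (by ring)

end AtRisk

theorem continuousOn_uncurry_atRisk {n τ : ℝ} {S qP qI : ℝ → ℝ} (hS : ContinuousOn S (Icc 0 τ))
    (hqP : ContinuousOn qP (Icc 0 τ)) (hqI : ContinuousOn qI (Icc 0 τ)) :
    ContinuousOn (uncurry fun r p => n * S r * ((1 - p) * qP r + p * qI r))
      (Icc 0 τ ×ˢ Icc 0 1) := by
  have hfst {g : ℝ → ℝ} (hg : ContinuousOn g (Icc 0 τ)) :
      ContinuousOn (fun x : ℝ × ℝ => g x.1) (Icc 0 τ ×ˢ Icc 0 1) :=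
    hg.comp continuousOn_fst fun _ hx => hx.1
  exact (continuousOn_const.mul (hfst hS)).mul
    (((continuousOn_const.sub continuousOn_snd).mul (hfst hqP)).add
      (continuousOn_snd.mul (hfst hqI)))

theorem hasDerivAt_atRisk (n s a b q : ℝ) :
    HasDerivAt (fun p => n * s * ((1 - p) * a + p * b)) (n * s * (b - a)) q :=
  ((((hasDerivAt_id q).const_sub 1).mul_const a).add
    ((hasDerivAt_id q).mul_const b)).const_mul (n * s) |>.congr_deriv (by ring)

theorem weighted_objective_interior_min_orthogonality_general
    (τ n : ℝ) (hτ : 0 < τ) (hn : 0 < n)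
    (f S qP qI : ℝ → ℝ)
    (hf_cont : ContinuousOn f (Set.Icc 0 τ)) (hS_cont : ContinuousOn S (Set.Icc 0 τ))
    (hqP_cont : ContinuousOn qP (Set.Icc 0 τ)) (hqI_cont : ContinuousOn qI (Set.Icc 0 τ))
    (hS_pos : ∀ r ∈ Set.Icc (0:ℝ) τ, 0 < S r)
    (ψ : ℝ → ℝ) (hψ : ∀ r, ψ r = qI r - qP r)
    (Y : ℝ → ℝ → ℝ) (hY : ∀ r p, Y r p = n * S r * ((1 - p) * qP r + p * qI r))
    (hY_pos : ∀ p ∈ Set.Icc (0:ℝ) 1, ∀ r ∈ Set.Icc (0:ℝ) τ, 0 < Y r p)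
    (Var : ℝ → ℝ → ℝ)
    (hVar : ∀ t p, Var t p = S t ^ 2 * ∫ r in (0:ℝ)..t, f r / (Y r p * S r))
(W : ℝ → ℝ) (hW_cont : ContinuousOn W (Set.Icc 0 τ))
    (V : ℝ → ℝ → ℝ)
    (hV : ∀ t p, V t p = S t ^ 2 * ∫ r in (0:ℝ)..t, f r * ψ r / (Y r p) ^ 2)
    (K : ℝ → ℝ) (hK : ∀ p, K p = ∫ t in (0:ℝ)..τ, W t * Var t p)
    (pstar : ℝ) (hpstar : pstar ∈ Set.Ioo (0:ℝ) 1)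
    (hmin : ∀ p ∈ Set.Icc (0:ℝ) 1, K pstar ≤ K p) :
    ∫ t in (0:ℝ)..τ, W t * V t pstar = 0 := by
  obtain rfl : ψ = fun r => qI r - qP r := funext hψ
  obtain rfl : Y = fun r p => n * S r * ((1 - p) * qP r + p * qI r) := funext₂ hY
  obtain rfl : K = fun p => ∫ t in (0:ℝ)..τ, W t * Var t p := funext hK
  have hK_deriv := hasDerivAt_integral_weighted_variance hτ.le hW_cont hf_cont hS_cont
    (hqI_cont.sub hqP_cont) (continuousOn_uncurry_atRisk hS_cont hqP_cont hqI_cont) hS_pos hY_pos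
    (fun r => hasDerivAt_atRisk n (S r) (qP r) (qI r)) hpstar
  simp only [← hVar] at hK_deriv
  have hK_min : IsLocalMin (fun p => ∫ t in (0:ℝ)..τ, W t * Var t p) pstar :=
    eventually_of_mem (isOpen_Ioo.mem_nhds hpstar) fun q hq => hmin q (Ioo_subset_Icc_self hq)
  simp only [hV]
  simpa [hn.ne'] using hK_min.hasDerivAt_eq_zero hK_deriv

/-- Proposition 2, optimality condition: If π* ∈ (0, 1) minimizes
K(π) = ∫₀^τ W(t)·Var(t, π) dt over [0, 1], then W and V(·, π*) are orthogonal over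
[0, τ], i.e. ∫₀^τ W(t)·V(t, π*) dt = 0. -/
theorem weighted_objective_interior_min_orthogonality
    (τ θ n c : ℝ) (hτ : 0 < τ) (hθ : 0 < θ) (hn : 0 < n) (hc : 0 < c)
    (f S qP qI : ℝ → ℝ)
    (hf_cont : ContinuousOn f (Set.Icc 0 τ)) (hS_cont : ContinuousOn S (Set.Icc 0 τ))
    (hqP_cont : ContinuousOn qP (Set.Icc 0 τ)) (hqI_cont : ContinuousOn qI (Set.Icc 0 τ))
    (hf_pos : ∀ r ∈ Set.Icc (0:ℝ) τ, 0 < f r) (hS_pos : ∀ r ∈ Set.Icc (0:ℝ) τ, 0 < S r)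
    (hqP_pos : ∀ r ∈ Set.Icc (0:ℝ) τ, 0 < qP r) (hqI_pos : ∀ r ∈ Set.Icc (0:ℝ) τ, 0 < qI r)
    (ψ : ℝ → ℝ) (hψ : ∀ r, ψ r = qI r - qP r)
    (Y : ℝ → ℝ → ℝ) (hY : ∀ r p, Y r p = n * S r * ((1 - p) * qP r + p * qI r))
    (hY_pos : ∀ p ∈ Set.Icc (0:ℝ) 1, ∀ r ∈ Set.Icc (0:ℝ) τ, 0 < Y r p)
    (Var : ℝ → ℝ → ℝ)
    (hVar : ∀ t p, Var t p = S t ^ 2 * ∫ r in (0:ℝ)..t, f r / (Y r p * S r))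
(W : ℝ → ℝ) (hW_cont : ContinuousOn W (Set.Icc 0 τ))
    (hW_pos : ∀ t ∈ Set.Icc (0:ℝ) τ, 0 < W t)
    (hW_int : (∫ t in (0:ℝ)..τ, W t) = 1)
    (V : ℝ → ℝ → ℝ)
    (hV : ∀ t p, V t p = S t ^ 2 * ∫ r in (0:ℝ)..t, f r * ψ r / (Y r p) ^ 2)
    (K : ℝ → ℝ) (hK : ∀ p, K p = ∫ t in (0:ℝ)..τ, W t * Var t p)
    (pstar : ℝ) (hpstar : pstar ∈ Set.Ioo (0:ℝ) 1)
    (hmin : ∀ p ∈ Set.Icc (0:ℝ) 1, K pstar ≤ K p) :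
    ∫ t in (0:ℝ)..τ, W t * V t pstar = 0 :=
  weighted_objective_interior_min_orthogonality_general τ n hτ hn f S qP qI hf_cont hS_cont hqP_cont
    hqI_cont hS_pos ψ hψ Y hY hY_pos Var hVar W hW_cont V hV K hK pstar hpstar hmin
end

section
/- (Proposition 2, boundary case.) If for every π ∈ (0, 1) the orthogonality condition fails, i.e. ∫₀^τ W(t)·V(t, π) dt ≠ 0 where V(t, π) = S(t)²·∫₀^t f(r)·ψ(r)/Y(r, π)² dr, then the minimum of K(π) = ∫₀^τ W(t)·Var(t, π) dt over [0, 1] is attained at a boundary point: min(K(0), K(1)) ≤ K(π) for every π ∈ [0, 1]. -/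
/-!
Since `Y(r, π)` is affine in `π` with slope `d(r) = n S(r) ψ(r)`, the second-order expansion
`1/Y(r, π') = 1/Y(r, π) - (π' - π) d(r) / Y(r, π)² + (π' - π)² d(r)² / (Y(r, π)² Y(r, π'))`
is exact. Integrating it against the nonnegative weights of `K` gives
`|K π' - K π + n (π' - π) ∫ W V(·, π)| ≤ C (π' - π)²` for `π, π' ∈ [0, 1]`, with `C` uniform
because `Y(r, π) ≥ n S(r) min (qP r) (qI r)` there. Hence `K` is continuous on `[0, 1]` with
derivative `-n ∫ W V(·, π)`, so a minimiser of `K` in `(0, 1)` would be a critical point, which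
the hypothesis rules out.
-/

open Set Topology Asymptotics intervalIntegral

theorem hasDerivWithinAt_of_abs_sub_sub_le_sq {f : ℝ → ℝ} {s : Set ℝ} {x f' C : ℝ}
    (h : ∀ y ∈ s, |f y - f x - f' * (y - x)| ≤ C * (y - x) ^ 2) :
    HasDerivWithinAt f f' s x := by
  rw [hasDerivWithinAt_iff_isLittleO]
  have hO : (fun y => f y - f x - (y - x) • f') =O[𝓝[s] x] fun y => ‖y - x‖ ^ 2 :=
    IsBigO.of_bound C <| eventually_nhdsWithin_of_forall fun y hy => by
      simpa [smul_eq_mul, mul_comm] using h y hy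
  exact hO.trans_isLittleO <| (isLittleO_pow_sub_sub x one_lt_two).mono nhdsWithin_le_nhds

theorem min_le_of_hasDerivAt_ne_zero {f f' : ℝ → ℝ} {a b : ℝ}
    (hf : ContinuousOn f (Icc a b)) (hf' : ∀ x ∈ Ioo a b, HasDerivAt f (f' x) x)
    (hne : ∀ x ∈ Ioo a b, f' x ≠ 0) : ∀ x ∈ Icc a b, min (f a) (f b) ≤ f x := by
  intro x hx
  obtain ⟨c, hc, hmin⟩ := isCompact_Icc.exists_isMinOn ⟨x, hx⟩ hf
  refine le_trans ?_ (hmin hx)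
  rcases eq_endpoints_or_mem_Ioo_of_mem_Icc hc with rfl | rfl | hc'
  · exact min_le_left _ _
  · exact min_le_right _ _
  · exact absurd ((hmin.isLocalMin (Icc_mem_nhds hc'.1 hc'.2)).hasDerivAt_eq_zero (hf' c hc'))
      (hne c hc')

noncomputable def nestedIntegral (w g : ℝ → ℝ) (τ : ℝ) : ℝ :=
  ∫ t in (0:ℝ)..τ, w t * ∫ r in (0:ℝ)..t, g r

section nestedIntegral

variable {w g h : ℝ → ℝ} {τ : ℝ}

theorem intervalIntegrable_mul_primitive (hτ : 0 ≤ τ) (hw : ContinuousOn w (Icc 0 τ))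
    (hg : ContinuousOn g (Icc 0 τ)) :
    IntervalIntegrable (fun t => w t * ∫ r in (0:ℝ)..t, g r) MeasureTheory.volume 0 τ := by
  have hprim := continuousOn_primitive_interval (μ := MeasureTheory.volume)
    (hg.mono (uIcc_of_le hτ).subset).integrableOn_Icc
  rw [uIcc_of_le hτ] at hprim
  exact (hw.mul hprim).intervalIntegrable_of_Icc hτ

theorem nestedIntegral_const_mul (c : ℝ) :
    nestedIntegral w (fun r => c * g r) τ = c * nestedIntegral w g τ := by
  simp only [nestedIntegral, ← integral_const_mul, mul_left_comm]

theorem nestedIntegral_add (hτ : 0 ≤ τ) (hw : ContinuousOn w (Icc 0 τ))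
    (hg : ContinuousOn g (Icc 0 τ)) (hh : ContinuousOn h (Icc 0 τ)) :
    nestedIntegral w (fun r => g r + h r) τ = nestedIntegral w g τ + nestedIntegral w h τ := by
  unfold nestedIntegral
  rw [← integral_add (intervalIntegrable_mul_primitive hτ hw hg)
    (intervalIntegrable_mul_primitive hτ hw hh)]
  refine integral_congr fun t ht => ?_
  rw [uIcc_of_le hτ] at ht
  have hsub : uIcc 0 t ⊆ Icc 0 τ := (uIcc_of_le ht.1).trans_subset (Icc_subset_Icc_right ht.2)
  simp only [← mul_add]
  rw [integral_add ((hg.mono hsub).intervalIntegrable) ((hh.mono hsub).intervalIntegrable)]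

theorem nestedIntegral_mono (hτ : 0 ≤ τ) (hw : ContinuousOn w (Icc 0 τ))
    (hw_nonneg : ∀ t ∈ Icc 0 τ, 0 ≤ w t)
    (hg : ContinuousOn g (Icc 0 τ)) (hh : ContinuousOn h (Icc 0 τ))
    (hgh : ∀ r ∈ Icc 0 τ, g r ≤ h r) :
    nestedIntegral w g τ ≤ nestedIntegral w h τ := by
  refine integral_mono_on hτ (intervalIntegrable_mul_primitive hτ hw hg)
    (intervalIntegrable_mul_primitive hτ hw hh) fun t ht => ?_
  have hsub : Icc 0 t ⊆ Icc 0 τ := Icc_subset_Icc_right ht.2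
  refine mul_le_mul_of_nonneg_left (integral_mono_on ht.1 ?_ ?_ fun r hr => hgh r (hsub hr))
    (hw_nonneg t ht)
  · exact (hg.mono hsub).intervalIntegrable_of_Icc ht.1
  · exact (hh.mono hsub).intervalIntegrable_of_Icc ht.1

theorem nestedIntegral_congr (hτ : 0 ≤ τ) (hgh : EqOn g h (Icc 0 τ)) :
    nestedIntegral w g τ = nestedIntegral w h τ := by
  refine integral_congr fun t ht => ?_
  rw [uIcc_of_le hτ] at ht
  refine congrArg (w t * ·) (integral_congr fun r hr => hgh ?_)
  rw [uIcc_of_le ht.1] at hr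
  exact ⟨hr.1, hr.2.trans ht.2⟩

theorem nestedIntegral_nonneg (hτ : 0 ≤ τ) (hw : ∀ t ∈ Icc 0 τ, 0 ≤ w t)
    (hg : ∀ r ∈ Icc 0 τ, 0 ≤ g r) : 0 ≤ nestedIntegral w g τ :=
  integral_nonneg hτ fun t ht => mul_nonneg (hw t ht) <|
    integral_nonneg ht.1 fun r hr => hg r ⟨hr.1, hr.2.trans ht.2⟩

end nestedIntegral

theorem abs_nestedIntegral_sub_sub_le {w g₀ g₁ d ρ B : ℝ → ℝ} {τ c h : ℝ} (hτ : 0 ≤ τ)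
    (hw : ContinuousOn w (Icc 0 τ)) (hw_nonneg : ∀ t ∈ Icc 0 τ, 0 ≤ w t)
    (hg₀ : ContinuousOn g₀ (Icc 0 τ)) (hd : ContinuousOn d (Icc 0 τ))
    (hρ : ContinuousOn ρ (Icc 0 τ)) (hB : ContinuousOn B (Icc 0 τ))
    (hρ_nonneg : ∀ r ∈ Icc 0 τ, 0 ≤ ρ r) (hρ_le : ∀ r ∈ Icc 0 τ, ρ r ≤ B r)
    (hg₁ : EqOn g₁ (fun r => g₀ r + h * (c * d r) + h ^ 2 * ρ r) (Icc 0 τ)) :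
    |nestedIntegral w g₁ τ - nestedIntegral w g₀ τ - c * nestedIntegral w d τ * h|
      ≤ nestedIntegral w B τ * h ^ 2 := by
  have hhd : ContinuousOn (fun r => h * (c * d r)) (Icc 0 τ) :=
    continuousOn_const.mul (continuousOn_const.mul hd)
  have hexpand : nestedIntegral w g₁ τ = nestedIntegral w g₀ τ
      + h * (c * nestedIntegral w d τ) + h ^ 2 * nestedIntegral w ρ τ := by
    rw [nestedIntegral_congr hτ hg₁, nestedIntegral_add hτ hw ?_ ?_,
      nestedIntegral_add hτ hw hg₀ hhd, nestedIntegral_const_mul, nestedIntegral_const_mul,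
      nestedIntegral_const_mul]
    · exact hg₀.add hhd
    · exact continuousOn_const.mul hρ
  have hρ_int : 0 ≤ nestedIntegral w ρ τ := nestedIntegral_nonneg hτ hw_nonneg hρ_nonneg
  calc _ = |nestedIntegral w ρ τ * h ^ 2| := by rw [hexpand]; ring_nf
    _ = nestedIntegral w ρ τ * h ^ 2 := abs_of_nonneg (by positivity)
    _ ≤ _ := mul_le_mul_of_nonneg_right
      (nestedIntegral_mono hτ hw hw_nonneg hρ hB hρ_le) (sq_nonneg h)

noncomputable def atRisk (n : ℝ) (S qP qI : ℝ → ℝ) (r p : ℝ) : ℝ :=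
  n * S r * ((1 - p) * qP r + p * qI r)

section atRisk

variable {n r p q : ℝ} {S qP qI : ℝ → ℝ}

theorem atRisk_sub_atRisk :
    atRisk n S qP qI r q - atRisk n S qP qI r p = (q - p) * (n * S r * (qI r - qP r)) := by
  unfold atRisk; ring

theorem mul_min_le_atRisk (hn : 0 ≤ n) (hS : 0 ≤ S r) (hp : p ∈ Icc (0:ℝ) 1) :
    n * S r * min (qP r) (qI r) ≤ atRisk n S qP qI r p := by
  have hmin : min (qP r) (qI r) ≤ (1 - p) * qP r + p * qI r := by
    nlinarith [min_le_left (qP r) (qI r), min_le_right (qP r) (qI r), hp.1, hp.2]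
  exact mul_le_mul_of_nonneg_left hmin (mul_nonneg hn hS)

theorem atRisk_pos (hn : 0 < n) (hS : 0 < S r) (hqP : 0 < qP r) (hqI : 0 < qI r)
    (hp : p ∈ Icc (0:ℝ) 1) : 0 < atRisk n S qP qI r p :=
  (by positivity : 0 < n * S r * min (qP r) (qI r)).trans_le
    (mul_min_le_atRisk hn.le hS.le hp)

theorem continuousOn_atRisk {s : Set ℝ} (hS : ContinuousOn S s) (hqP : ContinuousOn qP s)
    (hqI : ContinuousOn qI s) : ContinuousOn (fun r => atRisk n S qP qI r p) s := by
  unfold atRisk; fun_prop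

theorem div_sq_mul_atRisk_le (hn : 0 < n) (hS : 0 < S r) (hqP : 0 < qP r) (hqI : 0 < qI r)
    {x : ℝ} (hx : 0 ≤ x) (hp : p ∈ Icc (0:ℝ) 1) (hq : q ∈ Icc (0:ℝ) 1) :
    x / (atRisk n S qP qI r p ^ 2 * atRisk n S qP qI r q)
      ≤ x / (n * S r * min (qP r) (qI r)) ^ 3 := by
  have hm : 0 < n * S r * min (qP r) (qI r) := by positivity
  have hp' := mul_min_le_atRisk (qP := qP) (qI := qI) hn.le hS.le hp
  have hq' := mul_min_le_atRisk (qP := qP) (qI := qI) hn.le hS.le hq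
  refine div_le_div_of_nonneg_left hx (pow_pos hm 3) ?_
  rw [pow_succ]
  gcongr

theorem div_atRisk_mul_eq (x : ℝ) (hp : atRisk n S qP qI r p ≠ 0)
    (hq : atRisk n S qP qI r q ≠ 0) (hS : S r ≠ 0) :
    x / (atRisk n S qP qI r q * S r) = x / (atRisk n S qP qI r p * S r)
      + (q - p) * (-n * (x * (qI r - qP r) / atRisk n S qP qI r p ^ 2))
      + (q - p) ^ 2 * (n ^ 2 * x * S r * (qI r - qP r) ^ 2
          / (atRisk n S qP qI r p ^ 2 * atRisk n S qP qI r q)) := by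
  field_simp
  linear_combination x * ((q - p) * (n * S r * (qI r - qP r)) - atRisk n S qP qI r p) *
    atRisk_sub_atRisk (n := n) (S := S) (qP := qP) (qI := qI) (r := r) (p := p) (q := q)

end atRisk

theorem exists_abs_nestedIntegral_div_atRisk_sub_le {w f S qP qI : ℝ → ℝ} {n τ : ℝ}
    (hτ : 0 ≤ τ) (hn : 0 < n) (hw : ContinuousOn w (Icc 0 τ)) (hw_nonneg : ∀ t ∈ Icc 0 τ, 0 ≤ w t)
    (hf : ContinuousOn f (Icc 0 τ)) (hf_nonneg : ∀ r ∈ Icc 0 τ, 0 ≤ f r)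
    (hS : ContinuousOn S (Icc 0 τ)) (hS_pos : ∀ r ∈ Icc 0 τ, 0 < S r)
    (hqP : ContinuousOn qP (Icc 0 τ)) (hqP_pos : ∀ r ∈ Icc 0 τ, 0 < qP r)
    (hqI : ContinuousOn qI (Icc 0 τ)) (hqI_pos : ∀ r ∈ Icc 0 τ, 0 < qI r) :
    ∃ C, ∀ p ∈ Icc (0:ℝ) 1, ∀ q ∈ Icc (0:ℝ) 1,
      |nestedIntegral w (fun r => f r / (atRisk n S qP qI r q * S r)) τ
        - nestedIntegral w (fun r => f r / (atRisk n S qP qI r p * S r)) τ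
        - -n * nestedIntegral w (fun r => f r * (qI r - qP r) / atRisk n S qP qI r p ^ 2) τ
          * (q - p)| ≤ C * (q - p) ^ 2 := by
  refine ⟨nestedIntegral w (fun r => n ^ 2 * f r * S r * (qI r - qP r) ^ 2
    / (n * S r * min (qP r) (qI r)) ^ 3) τ, fun p hp q hq => ?_⟩
  have hY_pos : ∀ p ∈ Icc (0:ℝ) 1, ∀ r ∈ Icc 0 τ, 0 < atRisk n S qP qI r p :=
    fun p hp r hr => atRisk_pos hn (hS_pos r hr) (hqP_pos r hr) (hqI_pos r hr) hp
  have hm : ∀ r ∈ Icc 0 τ, 0 < n * S r * min (qP r) (qI r) := fun r hr =>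
    mul_pos (mul_pos hn (hS_pos r hr)) (lt_min (hqP_pos r hr) (hqI_pos r hr))
  have hYp := continuousOn_atRisk (n := n) (p := p) hS hqP hqI
  have hYq := continuousOn_atRisk (n := n) (p := q) hS hqP hqI
  refine abs_nestedIntegral_sub_sub_le
    (ρ := fun r => n ^ 2 * f r * S r * (qI r - qP r) ^ 2
      / (atRisk n S qP qI r p ^ 2 * atRisk n S qP qI r q)) hτ hw hw_nonneg
    (hf.div (hYp.mul hS) fun r hr => (mul_pos (hY_pos p hp r hr) (hS_pos r hr)).ne')
    (ContinuousOn.div (by fun_prop) (by fun_prop) fun r hr => (pow_pos (hY_pos p hp r hr) 2).ne')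
    (ContinuousOn.div (by fun_prop) (by fun_prop)
      fun r hr => (mul_pos (pow_pos (hY_pos p hp r hr) 2) (hY_pos q hq r hr)).ne')
    (ContinuousOn.div (by fun_prop) (by fun_prop) fun r hr => (pow_pos (hm r hr) 3).ne')
    (fun r hr => ?_) (fun r hr => ?_) fun r hr => div_atRisk_mul_eq (f r)
      (hY_pos p hp r hr).ne' (hY_pos q hq r hr).ne' (hS_pos r hr).ne'
  · have := hf_nonneg r hr; have := hS_pos r hr; have := hY_pos p hp r hr
    have := hY_pos q hq r hr
    positivity
  · exact div_sq_mul_atRisk_le hn (hS_pos r hr) (hqP_pos r hr) (hqI_pos r hr)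
      (by have := hf_nonneg r hr; have := hS_pos r hr; positivity) hp hq

theorem weighted_objective_boundary_min_general
    (τ n : ℝ) (hτ : 0 < τ) (hn : 0 < n)
    (f S qP qI : ℝ → ℝ)
    (hf_cont : ContinuousOn f (Set.Icc 0 τ)) (hS_cont : ContinuousOn S (Set.Icc 0 τ))
    (hqP_cont : ContinuousOn qP (Set.Icc 0 τ)) (hqI_cont : ContinuousOn qI (Set.Icc 0 τ))
    (hf_pos : ∀ r ∈ Set.Icc (0:ℝ) τ, 0 < f r) (hS_pos : ∀ r ∈ Set.Icc (0:ℝ) τ, 0 < S r)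
    (hqP_pos : ∀ r ∈ Set.Icc (0:ℝ) τ, 0 < qP r) (hqI_pos : ∀ r ∈ Set.Icc (0:ℝ) τ, 0 < qI r)
    (ψ : ℝ → ℝ) (hψ : ∀ r, ψ r = qI r - qP r)
    (Y : ℝ → ℝ → ℝ) (hY : ∀ r p, Y r p = n * S r * ((1 - p) * qP r + p * qI r))
    (Var : ℝ → ℝ → ℝ)
    (hVar : ∀ t p, Var t p = S t ^ 2 * ∫ r in (0:ℝ)..t, f r / (Y r p * S r))
(W : ℝ → ℝ) (hW_cont : ContinuousOn W (Set.Icc 0 τ))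
    (hW_pos : ∀ t ∈ Set.Icc (0:ℝ) τ, 0 < W t)
    (V : ℝ → ℝ → ℝ)
    (hV : ∀ t p, V t p = S t ^ 2 * ∫ r in (0:ℝ)..t, f r * ψ r / (Y r p) ^ 2)
    (K : ℝ → ℝ) (hK : ∀ p, K p = ∫ t in (0:ℝ)..τ, W t * Var t p)
    (hne : ∀ p ∈ Set.Ioo (0:ℝ) 1, (∫ t in (0:ℝ)..τ, W t * V t p) ≠ 0) :
    ∀ p ∈ Set.Icc (0:ℝ) 1, min (K 0) (K 1) ≤ K p := by
  obtain rfl : Y = atRisk n S qP qI := funext₂ hY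
  obtain rfl : ψ = fun r => qI r - qP r := funext hψ
  have hK_eq : ∀ p, K p = nestedIntegral (fun t => W t * S t ^ 2)
      (fun r => f r / (atRisk n S qP qI r p * S r)) τ := fun p => by
    simp only [hK, hVar, nestedIntegral, mul_assoc]
  have hV_eq : ∀ p, ∫ t in (0:ℝ)..τ, W t * V t p = nestedIntegral (fun t => W t * S t ^ 2)
      (fun r => f r * (qI r - qP r) / atRisk n S qP qI r p ^ 2) τ := fun p => by
    simp only [hV, nestedIntegral, mul_assoc]
  obtain ⟨C, hC⟩ := exists_abs_nestedIntegral_div_atRisk_sub_le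
    (w := fun t => W t * S t ^ 2) hτ.le hn (hW_cont.mul (hS_cont.pow 2))
    (fun t ht => mul_nonneg (hW_pos t ht).le (sq_nonneg _))
    hf_cont (fun r hr => (hf_pos r hr).le) hS_cont hS_pos hqP_cont hqP_pos hqI_cont hqI_pos
  have hK_deriv : ∀ p ∈ Icc (0:ℝ) 1,
      HasDerivWithinAt K (-n * ∫ t in (0:ℝ)..τ, W t * V t p) (Icc 0 1) p := fun p hp =>
    hasDerivWithinAt_of_abs_sub_sub_le_sq fun q hq => by
      simpa only [hK_eq, hV_eq] using hC p hp q hq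
  exact min_le_of_hasDerivAt_ne_zero (fun p hp => (hK_deriv p hp).continuousWithinAt)
    (fun p hp => (hK_deriv p (Ioo_subset_Icc_self hp)).hasDerivAt (Icc_mem_nhds hp.1 hp.2))
    fun p hp => mul_ne_zero (neg_ne_zero.2 hn.ne') (hne p hp)

/-- Proposition 2, boundary case: If for every π ∈ (0, 1) the
orthogonality condition fails, i.e. ∫₀^τ W(t)·V(t, π) dt ≠ 0, then the minimum of
K over [0, 1] is attained at a boundary point. -/
theorem weighted_objective_boundary_min
    (τ θ n c : ℝ) (hτ : 0 < τ) (hθ : 0 < θ) (hn : 0 < n) (hc : 0 < c)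
    (f S qP qI : ℝ → ℝ)
    (hf_cont : ContinuousOn f (Set.Icc 0 τ)) (hS_cont : ContinuousOn S (Set.Icc 0 τ))
    (hqP_cont : ContinuousOn qP (Set.Icc 0 τ)) (hqI_cont : ContinuousOn qI (Set.Icc 0 τ))
    (hf_pos : ∀ r ∈ Set.Icc (0:ℝ) τ, 0 < f r) (hS_pos : ∀ r ∈ Set.Icc (0:ℝ) τ, 0 < S r)
    (hqP_pos : ∀ r ∈ Set.Icc (0:ℝ) τ, 0 < qP r) (hqI_pos : ∀ r ∈ Set.Icc (0:ℝ) τ, 0 < qI r)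
    (ψ : ℝ → ℝ) (hψ : ∀ r, ψ r = qI r - qP r)
    (Y : ℝ → ℝ → ℝ) (hY : ∀ r p, Y r p = n * S r * ((1 - p) * qP r + p * qI r))
    (hY_pos : ∀ p ∈ Set.Icc (0:ℝ) 1, ∀ r ∈ Set.Icc (0:ℝ) τ, 0 < Y r p)
    (Var : ℝ → ℝ → ℝ)
    (hVar : ∀ t p, Var t p = S t ^ 2 * ∫ r in (0:ℝ)..t, f r / (Y r p * S r))
(W : ℝ → ℝ) (hW_cont : ContinuousOn W (Set.Icc 0 τ))
    (hW_pos : ∀ t ∈ Set.Icc (0:ℝ) τ, 0 < W t)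
    (hW_int : (∫ t in (0:ℝ)..τ, W t) = 1)
    (V : ℝ → ℝ → ℝ)
    (hV : ∀ t p, V t p = S t ^ 2 * ∫ r in (0:ℝ)..t, f r * ψ r / (Y r p) ^ 2)
    (K : ℝ → ℝ) (hK : ∀ p, K p = ∫ t in (0:ℝ)..τ, W t * Var t p)
    (hne : ∀ p ∈ Set.Ioo (0:ℝ) 1, (∫ t in (0:ℝ)..τ, W t * V t p) ≠ 0) :
    ∀ p ∈ Set.Icc (0:ℝ) 1, min (K 0) (K 1) ≤ K p :=
  weighted_objective_boundary_min_general τ n hτ hn f S qP qI hf_cont hS_cont hqP_cont hqI_cont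
    hf_pos hS_pos hqP_pos hqI_pos ψ hψ Y hY Var hVar W hW_cont hW_pos V hV K hK hne
end
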